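/- Let α, d > 0, c ∈ ℝ, p ∈ ℝ and A > 0. There exists ρ₀ ≥ 1 such that for every ρ ≥ ρ₀ and every family of complex coefficients (c_{q,k,m,n}), indexed by integers q ≥ 3 and k, m, n ≥ 0 with k+m+n ≤ q, satisfying |c_{q,k,m,n}| ≤ A·ρ^{−q}, there exist K > 0 and δ₀ > 0 such that for all 0 < δ < δ₀ and all integers l with |l| ≥ 2: the series Υ^{[l]} := δ^{p} · Σ_{q ≥ 3} Σ_{k+m+n ≤ q} δ^{q} · c_{q,k,m,n} · I_{n, k+m+n+2/d}^{l, c/d} converges absolutely, and |Υ^{[l]}| ≤ K · δ^{p − 2/d} · e^{−(3|l|/4)·(απ)/(2dδ)}. (This is the bound on the Fourier coefficients Υ₀^{[l]}, |l| ≥ 2, of the Melnikov function in Theorem 2.3, stated for a general family of Taylor coefficients with analyticity bounds.) -/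

import Mathlib

/-- I_{n,Q}^{l,C} = ∫ e^{−iα|l|s/δ} sinh(ds)^n / cosh(ds)^{Q+1+iC|l|} ds. -/
noncomputable def Iint (α d δ C : ℝ) (l : ℤ) (n : ℕ) (Q : ℝ) : ℂ :=
  ∫ s : ℝ,
    Complex.exp (-(Complex.I * (α : ℂ) * ((|l| : ℤ) : ℂ) * (s : ℂ)) / (δ : ℂ))
      * ((Real.sinh (d * s) : ℝ) : ℂ) ^ n
      / ((Real.cosh (d * s) : ℂ) ^ (((Q : ℂ) + 1) + Complex.I * (C : ℂ) * ((|l| : ℤ) : ℂ)))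

/-- The general term δ^q · c_{q,k,m,n} · I_{n,k+m+n+2/d}^{l,c/d} of the Melnikov series,
extended by zero outside the index range q ≥ 3, k+m+n ≤ q. -/
noncomputable def melTerm (α d δ c : ℝ) (l : ℤ) (a : ℕ → ℕ → ℕ → ℕ → ℂ)
    (x : ℕ × ℕ × ℕ × ℕ) : ℂ :=
  if 3 ≤ x.1 ∧ x.2.1 + x.2.2.1 + x.2.2.2 ≤ x.1 then
    (δ : ℂ) ^ x.1 * a x.1 x.2.1 x.2.2.1 x.2.2.2
      * Iint α d δ (c / d) l x.2.2.2 (((x.2.1 + x.2.2.1 + x.2.2.2 : ℕ) : ℝ) + 2 / d)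
  else 0

/-!
Each `Iint` is the integral over `ℝ` of `e^{-iβs} sinh(ds)^n / cosh(ds)^w` with `β = α|l|/δ`
and `w = Q + 1 + iC|l|`. This function is holomorphic on the strip `|Im (ds)| < π/2` and decays
like `cosh(d Re s)^{-(Re w - n)}` there, so the line of integration can be moved down to
`Im s = -θ/d`. On that line `|e^{-iβs}| = e^{-βθ/d}`, `|cosh(ds)| ≥ cos θ · cosh(d Re s)` and
`|arg cosh(ds)| ≤ π/2`, which gives
`‖I‖ ≤ e^{-θα|l|/(dδ)} · cos θ^{-(Q+1)} · e^{π|C||l|/2} · ∫ cosh(dx)^{-(1+2/d)} dx`.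
Taking `ρ ≥ 4/cos θ` the factor `cos θ^{-(k+m+n)} ≤ cos θ^{-q}` is absorbed by `ρ^{-q}`, leaving a
geometric series over the indices `k + m + n ≤ q`. Finally `θ = 7π/16` exceeds the target rate
`3π/8` by `π/16`, and this margin absorbs `e^{π|c||l|/(2d)}` as soon as `8δ|c| ≤ α`.
-/

open Real MeasureTheory Filter Set Topology

namespace Complex

theorem cosh_re (z : ℂ) : (cosh z).re = Real.cosh z.re * Real.cos z.im := by
  simp [Complex.cosh, exp_re, Real.cosh_eq]
  ring

theorem norm_sinh_le_cosh_re (z : ℂ) : ‖sinh z‖ ≤ Real.cosh z.re := by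
  rw [Complex.sinh, Real.cosh_eq, norm_div, Complex.norm_two]
  gcongr
  refine (norm_sub_le _ _).trans_eq ?_
  simp [Complex.norm_exp]

theorem re_rpow_div_le_norm_cpow {u : ℂ} (w : ℂ) (hu : 0 < u.re) (hw : 0 ≤ w.re) :
    u.re ^ w.re / Real.exp (π / 2 * |w.im|) ≤ ‖u ^ w‖ := by
  rw [norm_cpow_of_ne_zero (fun h => by simp [h] at hu)]
  have harg : arg u * w.im ≤ π / 2 * |w.im| :=
    calc arg u * w.im ≤ |arg u| * |w.im| := by rw [← abs_mul]; exact le_abs_self _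
      _ ≤ π / 2 * |w.im| := by gcongr; exact abs_arg_le_pi_div_two_iff.mpr hu.le
  gcongr
  exact re_le_norm u

theorem cos_mul_cosh_re_le_cosh_re {z : ℂ} {θ : ℝ} (hθ : θ ≤ π) (hz : |z.im| ≤ θ) :
    Real.cos θ * Real.cosh z.re ≤ (cosh z).re := by
  rw [cosh_re, mul_comm, ← Real.cos_abs z.im]
  gcongr
  exact Real.cos_le_cos_of_nonneg_of_le_pi (abs_nonneg _) hθ hz

theorem cosh_re_pos {z : ℂ} (hz : |z.im| < π / 2) : 0 < (cosh z).re := by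
  rw [cosh_re, ← Real.cos_abs]
  exact mul_pos (Real.cosh_pos _) (Real.cos_pos_of_mem_Ioo ⟨by linarith [abs_nonneg z.im], hz⟩)

theorem norm_sinh_pow_div_cosh_cpow_le {u w : ℂ} {n : ℕ} {θ r : ℝ} (hθ : θ < π / 2)
    (hu : |u.im| ≤ θ) (hr : 0 < r) (hnr : n + r ≤ w.re) :
    ‖sinh u ^ n / cosh u ^ w‖
      ≤ Real.cos θ ^ (-w.re) * Real.exp (π / 2 * |w.im|) * Real.cosh u.re ^ (-r) := by
  have hcos : 0 < Real.cos θ :=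
    Real.cos_pos_of_mem_Ioo ⟨by linarith [abs_nonneg u.im, Real.pi_pos], hθ⟩
  have hch := Real.cosh_pos u.re
  have hw : 0 ≤ w.re := by linarith [(Nat.cast_nonneg n : (0 : ℝ) ≤ n)]
  have hlower : (Real.cos θ * Real.cosh u.re) ^ w.re / Real.exp (π / 2 * |w.im|)
      ≤ ‖cosh u ^ w‖ :=
    calc _ ≤ (cosh u).re ^ w.re / Real.exp (π / 2 * |w.im|) := by
          gcongr; exact cos_mul_cosh_re_le_cosh_re (by linarith [Real.pi_pos]) hu
      _ ≤ ‖cosh u ^ w‖ :=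
          re_rpow_div_le_norm_cpow w (cosh_re_pos (hu.trans_lt hθ)) hw
  calc ‖sinh u ^ n / cosh u ^ w‖
      ≤ Real.cosh u.re ^ n / ((Real.cos θ * Real.cosh u.re) ^ w.re
          / Real.exp (π / 2 * |w.im|)) := by
        rw [norm_div, norm_pow]
        gcongr
        exact norm_sinh_le_cosh_re u
    _ = Real.cos θ ^ (-w.re) * Real.exp (π / 2 * |w.im|)
          * Real.cosh u.re ^ ((n : ℝ) - w.re) := by
        rw [Real.mul_rpow hcos.le hch.le, Real.rpow_sub hch, Real.rpow_natCast,
          Real.rpow_neg hcos.le]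
        field_simp
    _ ≤ _ := by
        gcongr
        · exact Real.one_le_cosh _
        · linarith

end Complex

theorem Real.exp_abs_div_two_le_cosh (x : ℝ) : exp |x| / 2 ≤ cosh x := by
  rw [cosh_eq]; linarith [exp_abs_le x]

theorem Real.cosh_rpow_neg_le {r : ℝ} (hr : 0 ≤ r) (x : ℝ) :
    cosh x ^ (-r) ≤ 2 ^ r * exp (-(r * |x|)) :=
  calc cosh x ^ (-r) ≤ (exp |x| / 2) ^ (-r) :=
        rpow_le_rpow_of_nonpos (by positivity) (exp_abs_div_two_le_cosh x) (by linarith)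
    _ = 2 ^ r * exp (-(r * |x|)) := by
        rw [div_rpow (exp_pos _).le zero_le_two, ← exp_mul, rpow_neg zero_le_two]
        field_simp

theorem integrable_exp_neg_mul_abs {b : ℝ} (hb : 0 < b) :
    Integrable fun x : ℝ => exp (-(b * |x|)) := by
  refine (Continuous.locallyIntegrable (by fun_prop)
    ).integrable_of_isBigO_atTop_of_norm_isNegInvariant (g := fun x => exp (-b * x))
    (by simp [Function.comp_def]) ?_ ⟨Ioi 0, Ioi_mem_atTop 0, exp_neg_integrableOn_Ioi 0 hb⟩
  refine Asymptotics.IsBigO.of_bound' ?_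
  filter_upwards [eventually_ge_atTop 0] with x hx
  simp [abs_of_nonneg hx]

theorem integrable_cosh_rpow_neg {r : ℝ} (hr : 0 < r) :
    Integrable fun x : ℝ => cosh x ^ (-r) :=
  ((integrable_exp_neg_mul_abs hr).const_mul (2 ^ r)).mono'
    (continuous_cosh.rpow_const fun x => .inl (cosh_pos x).ne').aestronglyMeasurable
    (Eventually.of_forall fun x => by
      rw [norm_of_nonneg (rpow_nonneg (cosh_pos x).le _)]; exact cosh_rpow_neg_le hr.le x)

theorem tendsto_cosh_rpow_neg_cocompact {r : ℝ} (hr : 0 < r) :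
    Tendsto (fun x : ℝ => cosh x ^ (-r)) (cocompact ℝ) (𝓝 0) := by
  have hcosh : Tendsto cosh (cocompact ℝ) atTop :=
    tendsto_atTop_mono exp_abs_div_two_le_cosh
      ((tendsto_exp_atTop.comp tendsto_norm_cocompact_atTop).atTop_div_const two_pos)
  exact (tendsto_rpow_neg_atTop hr).comp hcosh

theorem Complex.integral_eq_integral_sub_mul_I_of_differentiableOn
    {E : Type*} [NormedAddCommGroup E] [NormedSpace ℂ E] [CompleteSpace E]
    {F : ℂ → E} {σ : ℝ} (hσ : 0 ≤ σ)
    (hF : DifferentiableOn ℂ F {z | -σ ≤ z.im ∧ z.im ≤ 0})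
    (h₀ : Integrable fun x : ℝ => F x) (hσint : Integrable fun x : ℝ => F (x - σ * I))
    {g : ℝ → ℝ} (hg : Tendsto g (cocompact ℝ) (𝓝 0))
    (hFg : ∀ x y : ℝ, -σ ≤ y → y ≤ 0 → ‖F (x + y * I)‖ ≤ g x) :
    ∫ x : ℝ, F x = ∫ x : ℝ, F (x - σ * I) := by
  set V : ℝ → E := fun T => ∫ y in -σ..0, F (T + y * I)
  have hrect : ∀ T : ℝ, (∫ x in -T..T, F x)
      = (∫ x in -T..T, F (x - σ * I)) + I • V T - I • V (-T) := by
    intro T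
    have h := integral_boundary_rect_eq_zero_of_differentiableOn F (-T - σ * I) T <| by
      refine hF.mono fun z hz => ?_
      rw [mem_reProdIm] at hz
      simpa [uIcc_of_le (neg_nonpos.mpr hσ)] using hz.2
    simp only [sub_re, neg_re, ofReal_re, mul_re, I_re, I_im, ofReal_im, sub_im, neg_im,
      mul_im, mul_zero, sub_zero, mul_one, zero_sub, neg_zero, ofReal_zero, zero_mul, add_zero,
      ofReal_neg σ, neg_mul, ← sub_eq_add_neg] at h
    change (∫ x in -T..T, F (x - σ * I)) - (∫ x in -T..T, F x) + I • V T - I • V (-T) = 0 at h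
    generalize (∫ x in -T..T, F (x - σ * I)) = B at h ⊢
    generalize (∫ x in -T..T, F x) = A at h ⊢
    rw [eq_comm, ← sub_eq_zero, ← h]
    abel
  have hV : Tendsto V (atBot ⊔ atTop) (𝓝 0) := by
    refine squeeze_zero_norm (fun T => ?_)
      ((hg.mono_left ?_).mul_const σ |>.trans_eq (by rw [zero_mul]))
    · have h := intervalIntegral.norm_integral_le_of_norm_le_const (C := g T) fun y hy => by
        rw [uIoc_of_le (neg_nonpos.mpr hσ)] at hy
        exact hFg T y hy.1.le hy.2
      rwa [zero_sub, neg_neg, abs_of_nonneg hσ] at h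
    exact sup_le atBot_le_cocompact atTop_le_cocompact
  have hlim := (intervalIntegral_tendsto_integral hσint tendsto_neg_atTop_atBot tendsto_id).add
    ((hV.mono_left le_sup_right).const_smul I) |>.sub
    (((hV.mono_left le_sup_left).comp tendsto_neg_atTop_atBot).const_smul I)
  rw [smul_zero, add_zero, sub_zero] at hlim
  exact tendsto_nhds_unique
    (intervalIntegral_tendsto_integral h₀ tendsto_neg_atTop_atBot tendsto_id)
    (hlim.congr fun T => (hrect T).symm)

noncomputable def IintIntegrand (β d : ℝ) (n : ℕ) (w z : ℂ) : ℂ :=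
  Complex.exp (-(Complex.I * β * z)) * (Complex.sinh (d * z) ^ n / Complex.cosh (d * z) ^ w)

section IintIntegrand

variable {β d θ r : ℝ} {n : ℕ} {w : ℂ}

theorem differentiableAt_IintIntegrand {z : ℂ} (hz : |d * z.im| < π / 2) :
    DifferentiableAt ℂ (IintIntegrand β d n w) z := by
  have hcosh : Complex.cosh (d * z) ∈ Complex.slitPlane :=
    .inl (Complex.cosh_re_pos (by rwa [Complex.im_ofReal_mul]))
  have hpow : Complex.cosh (d * z) ^ w ≠ 0 := fun h =>
    Complex.slitPlane_ne_zero hcosh ((Complex.cpow_eq_zero_iff _ _).mp h).1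
  unfold IintIntegrand
  exact (by fun_prop : DifferentiableAt ℂ (fun z : ℂ => Complex.exp (-(Complex.I * β * z))) z).mul
    ((by fun_prop : DifferentiableAt ℂ (fun z : ℂ => Complex.sinh (d * z) ^ n) z).div
      ((by fun_prop : DifferentiableAt ℂ (fun z : ℂ => Complex.cosh (d * z)) z).cpow_const
        hcosh) hpow)

theorem norm_IintIntegrand_le (hθ : θ < π / 2) (hr : 0 < r) (hnr : n + r ≤ w.re) {z : ℂ}
    (hz : |d * z.im| ≤ θ) :
    ‖IintIntegrand β d n w z‖ ≤ Real.exp (β * z.im)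
      * (Real.cos θ ^ (-w.re) * Real.exp (π / 2 * |w.im|)) * Real.cosh (d * z.re) ^ (-r) := by
  have hexp : ‖Complex.exp (-(Complex.I * β * z))‖ = Real.exp (β * z.im) := by
    simp [Complex.norm_exp]
  rw [IintIntegrand, norm_mul, hexp, mul_assoc, ← Complex.re_ofReal_mul]
  gcongr
  exact Complex.norm_sinh_pow_div_cosh_cpow_le hθ (by rwa [Complex.im_ofReal_mul]) hr hnr

theorem integrable_IintIntegrand_horizontal (hd : d ≠ 0) (hθ : θ < π / 2) (hr : 0 < r)
    (hnr : n + r ≤ w.re) {y : ℝ} (hy : |d * y| ≤ θ) :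
    Integrable fun x : ℝ => IintIntegrand β d n w (x + y * Complex.I) := by
  refine (((integrable_cosh_rpow_neg hr).comp_mul_left' hd).const_mul
    (Real.exp (β * y) * (Real.cos θ ^ (-w.re) * Real.exp (π / 2 * |w.im|)))).mono' ?_ ?_
  · refine Continuous.aestronglyMeasurable <| continuous_iff_continuousAt.mpr fun x => ?_
    refine (differentiableAt_IintIntegrand ?_).continuousAt.comp
      (f := fun x : ℝ => x + y * Complex.I) (by fun_prop)
    simpa using hy.trans_lt hθ
  · refine Eventually.of_forall fun x => ?_
    simpa [mul_assoc] using norm_IintIntegrand_le (β := β) (z := x + y * Complex.I) hθ hr hnr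
      (by simpa using hy)

theorem abs_mul_le_of_mem_strip (hd : 0 < d) {y : ℝ} (hy₁ : -(θ / d) ≤ y) (hy₂ : y ≤ 0) :
    |d * y| ≤ θ := by
  have hθy : -θ ≤ d * y :=
    calc -θ = d * -(θ / d) := by field_simp
      _ ≤ d * y := by gcongr
  rw [abs_le]
  constructor <;> nlinarith

theorem integral_IintIntegrand_eq_integral_sub_mul_I (hd : 0 < d) (hβ : 0 ≤ β) (hθ0 : 0 ≤ θ)
    (hθ : θ < π / 2) (hr : 0 < r) (hnr : n + r ≤ w.re) :
    ∫ x : ℝ, IintIntegrand β d n w x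
      = ∫ x : ℝ, IintIntegrand β d n w (x - (θ / d : ℝ) * Complex.I) := by
  set M := Real.cos θ ^ (-w.re) * Real.exp (π / 2 * |w.im|)
  have hM : 0 ≤ M :=
    mul_nonneg (rpow_nonneg (cos_nonneg_of_mem_Icc ⟨by linarith, hθ.le⟩) _) (by positivity)
  have hσ : 0 ≤ θ / d := div_nonneg hθ0 hd.le
  have h₀ := integrable_IintIntegrand_horizontal (β := β) hd.ne' hθ hr hnr (y := 0)
    (by simpa using hθ0)
  have hσint := integrable_IintIntegrand_horizontal (β := β) hd.ne' hθ hr hnr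
    (abs_mul_le_of_mem_strip hd le_rfl (neg_nonpos.mpr hσ))
  simp only [Complex.ofReal_zero, zero_mul, add_zero] at h₀
  simp only [Complex.ofReal_neg, neg_mul, ← sub_eq_add_neg] at hσint
  refine Complex.integral_eq_integral_sub_mul_I_of_differentiableOn hσ
    (fun z hz => (differentiableAt_IintIntegrand
      ((abs_mul_le_of_mem_strip hd hz.1 hz.2).trans_lt hθ)).differentiableWithinAt)
    h₀ hσint (g := fun x => M * Real.cosh (d * x) ^ (-r)) ?_ fun x y hy₁ hy₂ => ?_
  · simpa using ((tendsto_cosh_rpow_neg_cocompact hr).comp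
      (tendsto_cocompact_mul_left₀ hd.ne')).const_mul M
  · calc _ ≤ Real.exp (β * y) * M * Real.cosh (d * x) ^ (-r) := by
          simpa using norm_IintIntegrand_le (β := β) (z := x + y * Complex.I) hθ hr hnr
            (by simpa using abs_mul_le_of_mem_strip hd hy₁ hy₂)
      _ ≤ 1 * M * Real.cosh (d * x) ^ (-r) := by
          gcongr
          exact Real.exp_le_one_iff.mpr (mul_nonpos_of_nonneg_of_nonpos hβ hy₂)
      _ = M * Real.cosh (d * x) ^ (-r) := by rw [one_mul]

end IintIntegrand

theorem Iint_eq_integral_IintIntegrand (α d δ C : ℝ) (l : ℤ) (n : ℕ) (Q : ℝ) :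
    Iint α d δ C l n Q = ∫ x : ℝ, IintIntegrand (α * (|l| : ℤ) / δ) d n
      (Q + 1 + Complex.I * C * ((|l| : ℤ) : ℝ)) x := by
  unfold Iint IintIntegrand
  congr 1 with x
  simp only [Complex.ofReal_mul, Complex.ofReal_div, Complex.ofReal_intCast, Complex.ofReal_sinh,
    Complex.ofReal_cosh]
  ring_nf

theorem norm_Iint_le {α d δ C θ r Q : ℝ} {l : ℤ} {n : ℕ} (hα : 0 ≤ α) (hd : 0 < d) (hδ : 0 < δ)
    (hθ0 : 0 ≤ θ) (hθ : θ < π / 2) (hr : 0 < r) (hnr : n + r ≤ Q + 1) :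
    ‖Iint α d δ C l n Q‖ ≤ Real.exp (-(θ * α * (|l| : ℤ) / (d * δ)))
      * (Real.cos θ ^ (-(Q + 1)) * Real.exp (π / 2 * (|C| * (|l| : ℤ))))
      * ∫ x : ℝ, Real.cosh (d * x) ^ (-r) := by
  set w : ℂ := Q + 1 + Complex.I * C * ((|l| : ℤ) : ℝ)
  have hwre : w.re = Q + 1 := by simp [w]
  have hwim : |w.im| = |C| * (|l| : ℤ) := by simp [w, abs_mul]
  rw [Iint_eq_integral_IintIntegrand, integral_IintIntegrand_eq_integral_sub_mul_I hd
    (by positivity) hθ0 hθ hr (by rwa [hwre]), ← integral_const_mul]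
  refine norm_integral_le_of_norm_le
    (((integrable_cosh_rpow_neg hr).comp_mul_left' hd.ne').const_mul _)
    (Eventually.of_forall fun x => ?_)
  have hz : (x - (θ / d : ℝ) * Complex.I).im = -(θ / d) := by simp
  have h := norm_IintIntegrand_le (β := α * (|l| : ℤ) / δ) (d := d)
    (z := x - (θ / d : ℝ) * Complex.I) hθ hr (by rwa [hwre])
    (hz ▸ abs_mul_le_of_mem_strip hd le_rfl (neg_nonpos.mpr (div_nonneg hθ0 hd.le)))
  rw [hz, hwre, hwim] at h
  convert h using 3
  · field_simp
  · simp

theorem hasSum_geometric_two_prod :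
    HasSum (fun x : ℕ × ℕ × ℕ × ℕ =>
      (1 / 2 : ℝ) ^ x.1 * ((1 / 2 : ℝ) ^ x.2.1 * ((1 / 2 : ℝ) ^ x.2.2.1 * (1 / 2 : ℝ) ^ x.2.2.2)))
      16 := by
  have g := hasSum_geometric_two
  have hg : ∀ i : ℕ, 0 ≤ (1 / 2 : ℝ) ^ i := fun i => by positivity
  have g2 := g.mul g (g.summable.mul_of_nonneg g.summable hg hg)
  have g3 := g.mul g2 (g.summable.mul_of_nonneg g2.summable hg fun _ => by positivity)
  have g4 := g.mul g3 (g.summable.mul_of_nonneg g3.summable hg fun _ => by positivity)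
  norm_num at g4
  exact g4

theorem summable_norm_and_norm_tsum_le_of_norm_le_geometric {E : Type*} [NormedAddCommGroup E]
    {f : ℕ × ℕ × ℕ × ℕ → E} {C : ℝ}
    (hf : ∀ q k m n, k + m + n ≤ q → ‖f (q, k, m, n)‖ ≤ C * (1 / 4 : ℝ) ^ q)
    (hf₀ : ∀ q k m n, q < k + m + n → f (q, k, m, n) = 0) :
    Summable (fun x => ‖f x‖) ∧ ‖∑' x, f x‖ ≤ 16 * C := by
  have hC : 0 ≤ C := by simpa using (norm_nonneg _).trans (hf 0 0 0 0 le_rfl)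
  have hu := hasSum_geometric_two_prod.mul_left C
  have hle : ∀ x, ‖f x‖ ≤ C * ((1 / 2 : ℝ) ^ x.1
      * ((1 / 2 : ℝ) ^ x.2.1 * ((1 / 2 : ℝ) ^ x.2.2.1 * (1 / 2 : ℝ) ^ x.2.2.2))) := by
    rintro ⟨q, k, m, n⟩
    rcases le_or_gt (k + m + n) q with hq | hq
    · refine (hf q k m n hq).trans (mul_le_mul_of_nonneg_left ?_ hC)
      calc (1 / 4 : ℝ) ^ q = (1 / 2) ^ q * (1 / 2) ^ q := by rw [← mul_pow]; norm_num
        _ ≤ (1 / 2) ^ q * (1 / 2) ^ (k + m + n) := by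
            gcongr (1 / 2) ^ q * ?_
            exact pow_le_pow_of_le_one (by norm_num) (by norm_num) hq
        _ = _ := by simp only [pow_add]; ring
    · rw [hf₀ q k m n hq, norm_zero]
      positivity
  have hsum : Summable (fun x => ‖f x‖) :=
    hu.summable.of_nonneg_of_le (fun _ => norm_nonneg _) hle
  refine ⟨hsum, (norm_tsum_le_tsum_norm hsum).trans ?_⟩
  calc ∑' x, ‖f x‖ ≤ C * 16 := hu.tsum_eq ▸ hsum.tsum_le_tsum hle hu.summable
    _ = 16 * C := mul_comm _ _

theorem norm_melTerm_le {α d δ c θ ρ A : ℝ} {l : ℤ} {a : ℕ → ℕ → ℕ → ℕ → ℂ}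
    (hα : 0 ≤ α) (hd : 0 < d) (hδ : 0 < δ) (hA : 0 ≤ A) (hθ0 : 0 ≤ θ) (hθ : θ < π / 2)
    (hρ : 4 * δ ≤ ρ * Real.cos θ)
    (ha : ∀ q k m n : ℕ, 3 ≤ q → k + m + n ≤ q → ‖a q k m n‖ ≤ A * (ρ ^ q)⁻¹)
    {q k m n : ℕ} (hq : k + m + n ≤ q) :
    ‖melTerm α d δ c l a (q, k, m, n)‖
      ≤ A * (Real.cos θ ^ (-(1 + 2 / d)) * ∫ x : ℝ, Real.cosh (d * x) ^ (-(1 + 2 / d)))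
        * (Real.exp (-(θ * α * (|l| : ℤ) / (d * δ)))
          * Real.exp (π / 2 * (|c / d| * (|l| : ℤ)))) * (1 / 4) ^ q := by
  set B := Real.cos θ ^ (-(1 + 2 / d)) * ∫ x : ℝ, Real.cosh (d * x) ^ (-(1 + 2 / d))
  set X := Real.exp (-(θ * α * (|l| : ℤ) / (d * δ))) * Real.exp (π / 2 * (|c / d| * (|l| : ℤ)))
  have hcos : 0 < Real.cos θ := cos_pos_of_mem_Ioo ⟨by linarith [pi_pos], hθ⟩
  have hB : 0 ≤ B :=
    mul_nonneg (rpow_nonneg hcos.le _) (integral_nonneg fun x => rpow_nonneg (cosh_pos _).le _)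
  by_cases h3 : 3 ≤ q
  swap
  · rw [melTerm, if_neg fun h => h3 h.1, norm_zero]
    positivity
  have hρ0 : 0 < ρ := by nlinarith
  have hI : ‖Iint α d δ (c / d) l n (((k + m + n : ℕ) : ℝ) + 2 / d)‖
      ≤ (Real.cos θ ^ q)⁻¹ * (B * X) := by
    have h := norm_Iint_le (C := c / d) (l := l) (n := n) (r := 1 + 2 / d)
      (Q := ((k + m + n : ℕ) : ℝ) + 2 / d) hα hd hδ hθ0 hθ (by positivity)
      (by push_cast; linarith [(Nat.cast_nonneg k : (0 : ℝ) ≤ k),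
        (Nat.cast_nonneg m : (0 : ℝ) ≤ m)])
    rw [show -(((k + m + n : ℕ) : ℝ) + 2 / d + 1) = -((k + m + n : ℕ) : ℝ) + -(1 + 2 / d) by ring,
      rpow_add hcos, rpow_neg hcos.le, rpow_natCast] at h
    have hpow : (Real.cos θ ^ (k + m + n))⁻¹ ≤ (Real.cos θ ^ q)⁻¹ :=
      inv_anti₀ (by positivity) (pow_le_pow_of_le_one hcos.le (cos_le_one θ) hq)
    calc _ ≤ _ := h
      _ = (Real.cos θ ^ (k + m + n))⁻¹ * (B * X) := by ring
      _ ≤ _ := by gcongr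
  rw [melTerm, if_pos ⟨h3, hq⟩]
  calc ‖(δ : ℂ) ^ q * a q k m n * Iint α d δ (c / d) l n (((k + m + n : ℕ) : ℝ) + 2 / d)‖
      ≤ δ ^ q * (A * (ρ ^ q)⁻¹) * ((Real.cos θ ^ q)⁻¹ * (B * X)) := by
        rw [norm_mul, norm_mul, norm_pow, Complex.norm_real, norm_of_nonneg hδ.le]
        gcongr
        exact ha q k m n h3 hq
    _ = A * B * X * (δ / (ρ * Real.cos θ)) ^ q := by
        rw [div_pow, mul_pow]
        field_simp
    _ ≤ A * B * X * (1 / 4) ^ q := by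
        refine mul_le_mul_of_nonneg_left (pow_le_pow_left₀ (by positivity) ?_ q) (by positivity)
        rw [div_le_iff₀ (by positivity)]
        linarith

theorem exp_neg_seven_pi_div_sixteen_mul_exp_le {α d δ c L : ℝ} (hd : 0 < d) (hδ : 0 < δ)
    (hL : 0 ≤ L) (hc : 8 * δ * |c| ≤ α) :
    Real.exp (-(7 * π / 16 * α * L / (d * δ))) * Real.exp (π / 2 * (|c / d| * L))
      ≤ Real.exp (-((3 * L / 4) * (α * π) / (2 * d * δ))) := by
  rw [← Real.exp_add, Real.exp_le_exp, abs_div, abs_of_pos hd, ← sub_nonneg]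
  have h : -((3 * L / 4) * (α * π) / (2 * d * δ))
      - (-(7 * π / 16 * α * L / (d * δ)) + π / 2 * (|c| / d * L))
      = π * L * (α - 8 * δ * |c|) / (16 * d * δ) := by
    field_simp
    ring
  rw [h]
  have := pi_pos
  apply div_nonneg (mul_nonneg (by positivity) (by linarith)) (by positivity)

theorem summable_melTerm_and_norm_tsum_le {α d δ c ρ A : ℝ} {l : ℤ}
    {a : ℕ → ℕ → ℕ → ℕ → ℂ} (hd : 0 < d) (hδ : 0 < δ) (hA : 0 ≤ A)
    (hρ : 4 * δ ≤ ρ * Real.cos (7 * π / 16)) (hc : 8 * δ * |c| ≤ α)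
    (ha : ∀ q k m n : ℕ, 3 ≤ q → k + m + n ≤ q → ‖a q k m n‖ ≤ A * (ρ ^ q)⁻¹) :
    Summable (fun x => ‖melTerm α d δ c l a x‖) ∧
      ‖∑' x, melTerm α d δ c l a x‖
        ≤ 16 * (A * (Real.cos (7 * π / 16) ^ (-(1 + 2 / d))
          * ∫ x : ℝ, Real.cosh (d * x) ^ (-(1 + 2 / d)))
          * Real.exp (-((3 * ((|l| : ℤ) : ℝ) / 4) * (α * π) / (2 * d * δ)))) := by
  have hα : 0 ≤ α := le_trans (by positivity) hc
  obtain ⟨hsum, htsum⟩ := summable_norm_and_norm_tsum_le_of_norm_le_geometric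
    (fun q k m n hq => norm_melTerm_le (c := c) (l := l) hα hd hδ hA (by positivity)
      (by linarith [pi_pos]) hρ ha hq)
    (fun q k m n hq => if_neg fun h => hq.not_ge h.2)
  refine ⟨hsum, htsum.trans ?_⟩
  have hJ : 0 ≤ ∫ x : ℝ, Real.cosh (d * x) ^ (-(1 + 2 / d)) :=
    integral_nonneg fun x => rpow_nonneg (cosh_pos _).le _
  have hcos : 0 ≤ Real.cos (7 * π / 16) :=
    cos_nonneg_of_mem_Icc ⟨by linarith [pi_pos], by linarith [pi_pos]⟩
  gcongr
  exact exp_neg_seven_pi_div_sixteen_mul_exp_le hd hδ (by positivity) hc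

theorem stmt12 (α d c p A : ℝ) (hα : 0 < α) (hd : 0 < d) (hA : 0 < A) :
    ∃ ρ₀ : ℝ, 1 ≤ ρ₀ ∧
      ∀ ρ : ℝ, ρ₀ ≤ ρ →
      ∀ a : ℕ → ℕ → ℕ → ℕ → ℂ,
        (∀ q k m n : ℕ, 3 ≤ q → k + m + n ≤ q → ‖a q k m n‖ ≤ A * (ρ ^ q)⁻¹) →
        ∃ K > (0 : ℝ), ∃ δ₀ > (0 : ℝ), ∀ δ : ℝ, 0 < δ → δ < δ₀ →
          ∀ l : ℤ, 2 ≤ |l| →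
            Summable (fun x : ℕ × ℕ × ℕ × ℕ => ‖melTerm α d δ c l a x‖) ∧
            ‖((δ ^ p : ℝ) : ℂ) * ∑' x : ℕ × ℕ × ℕ × ℕ, melTerm α d δ c l a x‖
              ≤ K * δ ^ (p - 2 / d)
                  * Real.exp (-((3 * ((|l| : ℤ) : ℝ) / 4) * (α * Real.pi) / (2 * d * δ))) := by
  have hcos : 0 < Real.cos (7 * π / 16) :=
    cos_pos_of_mem_Ioo ⟨by linarith [pi_pos], by linarith [pi_pos]⟩
  set B := Real.cos (7 * π / 16) ^ (-(1 + 2 / d)) * ∫ x : ℝ, Real.cosh (d * x) ^ (-(1 + 2 / d))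
  have hB : 0 ≤ B :=
    mul_nonneg (rpow_nonneg hcos.le _) (integral_nonneg fun x => rpow_nonneg (cosh_pos _).le _)
  refine ⟨max 1 (4 / Real.cos (7 * π / 16)), le_max_left _ _, fun ρ hρ a ha => ?_⟩
  refine ⟨16 * A * B + 1, by nlinarith [mul_nonneg hA.le hB], min 1 (α / (8 * (|c| + 1))),
    by positivity, fun δ hδ hδ₀ l hl => ?_⟩
  have hδ1 : δ < 1 := hδ₀.trans_le (min_le_left _ _)
  have hδc : 8 * δ * |c| ≤ α := by
    have := (lt_div_iff₀ (by positivity)).mp (hδ₀.trans_le (min_le_right _ _))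
    nlinarith [abs_nonneg c]
  have hρδ : 4 * δ ≤ ρ * Real.cos (7 * π / 16) := by
    have := (div_le_iff₀ hcos).mp ((le_max_right _ _).trans hρ)
    linarith
  obtain ⟨hsum, htsum⟩ := summable_melTerm_and_norm_tsum_le (l := l) hd hδ hA.le hρδ hδc ha
  refine ⟨hsum, ?_⟩
  have hδp : δ ^ p ≤ δ ^ (p - 2 / d) :=
    rpow_le_rpow_of_exponent_ge hδ hδ1.le (by linarith [div_pos two_pos hd])
  have hE := exp_pos (-((3 * ((|l| : ℤ) : ℝ) / 4) * (α * π) / (2 * d * δ)))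
  rw [norm_mul, Complex.norm_real, norm_of_nonneg (by positivity)]
  calc _ ≤ δ ^ (p - 2 / d) * (16 * (A * B
          * Real.exp (-((3 * ((|l| : ℤ) : ℝ) / 4) * (α * π) / (2 * d * δ))))) := by gcongr
    _ ≤ _ := by nlinarith [mul_pos (rpow_pos_of_pos hδ (p - 2 / d)) hE]
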